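/- Let a_1, …, a_m and b_1, …, b_p be nonnegative integers with a_1+⋯+a_m = b_1+⋯+b_p = N. Then in ℚ(q): [N; b_1,…,b_p] = ∑ q^{X(j)} · ∏_{β=1}^{m} [a_β; j_{1,β}, j_{2,β}, …, j_{p,β}], where the sum is over all m·p nonnegative integers j_{α,β} (α = 1,…,p; β = 1,…,m) satisfying j_{1,v}+j_{2,v}+⋯+j_{p,v} = a_v for each v = 1,…,m and j_{w,1}+j_{w,2}+⋯+j_{w,m} = b_w for each w = 1,…,p, and where X(j) = 2 ∑_{1 ≤ l_1 < l_2 ≤ p} ∑_{1 ≤ u_1 < u_2 ≤ m} j_{l_1,u_1} j_{l_2,u_2}. -/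

import Mathlib

noncomputable section

open Finset

/-- The field `ℚ(q)` of rational functions in one variable. -/
abbrev F : Type := RatFunc ℚ

/-- The variable `q`. -/
def q : F := RatFunc.X

/-- The q-Pochhammer symbol `(x; y)_n = ∏_{j=0}^{n-1} (1 - x yʲ)`. -/
def qPoch (x y : F) (n : ℕ) : F := ∏ i ∈ Finset.range n, (1 - x * y ^ i)

/-- `(q²;q²)_m = ∏_{i=1}^{m} (1 - q^{2i})`. -/
def qp (m : ℕ) : F := qPoch (q ^ 2) (q ^ 2) m

/-- The positive quantum binomial coefficient `[N; k]₊`. -/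
def qbin (N k : ℕ) : F := qp N / (qp k * qp (N - k))

/-- The quantum multinomial coefficient `[N; d_1, …, d_n]`. -/
def qmul (N : ℕ) {n : ℕ} (d : Fin n → ℕ) : F := qp N / ∏ i, qp (d i)

/-! Induction, driven by the q-Pascal rule `[N+1; B] = ∑_w q^{2(B_1+⋯+B_{w-1})} [N; B - e_w]`
(a telescoping sum). Applying the rule to the last column of a table `J` and lowering its entry
`(w, m)` by one matches the expansion for `(N+1, A, B)` with the one for `(N, A - e_m, B - e_w)`:
the change of `X(J)/2` plus the Pascal weight of the column is `B_1+⋯+B_{w-1}`, the mass of the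
rows above `w`. A zero last column is simply dropped, which needs a separate induction on `m`. -/

lemma one_sub_q_pow_ne_zero {k : ℕ} (hk : k ≠ 0) : 1 - q ^ k ≠ 0 := by
  rw [sub_ne_zero]
  intro h
  have hdeg := congrArg RatFunc.intDegree h
  rw [q, ← RatFunc.algebraMap_X, ← map_pow, RatFunc.intDegree_polynomial,
    RatFunc.intDegree_one, Polynomial.natDegree_X_pow] at hdeg
  exact hk (by exact_mod_cast hdeg.symm)

lemma qp_zero : qp 0 = 1 := by
  simp [qp, qPoch]

lemma qp_succ (n : ℕ) : qp (n + 1) = qp n * (1 - q ^ (2 * (n + 1))) := by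
  simp only [qp, qPoch, prod_range_succ]
  ring

lemma Pi.single_le_iff {ι α : Type*} [DecidableEq ι] [AddCommMonoid α] [PartialOrder α]
    [CanonicallyOrderedAdd α] {f : ι → α} {i : ι} {x : α} : Pi.single i x ≤ f ↔ x ≤ f i := by
  refine ⟨fun h => by simpa using h i, fun h j => ?_⟩
  rcases eq_or_ne j i with rfl | hj
  · simpa using h
  · simp [hj]

lemma Pi.sub_single_add_single {ι α : Type*} [DecidableEq ι] [AddCommMonoid α] [PartialOrder α]
    [CanonicallyOrderedAdd α] [Sub α] [OrderedSub α] {f : ι → α} {i : ι} {x : α} (h : x ≤ f i) :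
    f - Pi.single i x + Pi.single i x = f :=
  tsub_add_cancel_of_le (Pi.single_le_iff.mpr h)

lemma sum_sub_single {ι : Type*} [Fintype ι] [DecidableEq ι] {N : ℕ} {d : ι → ℕ} {w : ι}
    (hw : d w ≠ 0) (hd : ∑ i, d i = N + 1) : ∑ i, (d - Pi.single w 1 : ι → ℕ) i = N := by
  have h := congrArg (fun f : ι → ℕ => ∑ i, f i)
    (Pi.sub_single_add_single (f := d) (i := w) (Nat.one_le_iff_ne_zero.mpr hw))
  simp only [Pi.add_apply, sum_add_distrib, sum_pi_single', mem_univ, if_true, hd] at h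
  omega

lemma prod_qp_add_single {n : ℕ} (d : Fin n → ℕ) (w : Fin n) :
    ∏ i, qp ((d + Pi.single w 1 : Fin n → ℕ) i) = (1 - q ^ (2 * (d w + 1))) * ∏ i, qp (d i) := by
  rw [Fintype.prod_eq_mul_prod_compl w, Fintype.prod_eq_mul_prod_compl w (fun i => qp (d i))]
  have hcompl : ∀ i ∈ ({w}ᶜ : Finset (Fin n)),
      qp ((d + Pi.single w 1 : Fin n → ℕ) i) = qp (d i) := by
    intro i hi
    rw [Pi.add_apply, Pi.single_eq_of_ne (by simpa using hi), add_zero]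
  rw [prod_congr rfl hcompl, Pi.add_apply, Pi.single_eq_same, qp_succ]
  ring

lemma qmul_sub_single (N : ℕ) {n : ℕ} {d : Fin n → ℕ} {w : Fin n} (hw : d w ≠ 0) :
    qmul N (d - Pi.single w 1) = (1 - q ^ (2 * d w)) * (qp N / ∏ i, qp (d i)) := by
  obtain ⟨d, rfl⟩ : ∃ d' : Fin n → ℕ, d = d' + Pi.single w 1 :=
    ⟨_, (Pi.sub_single_add_single (Nat.one_le_iff_ne_zero.mpr hw)).symm⟩
  rw [add_tsub_cancel_right, prod_qp_add_single, qmul, mul_div_assoc']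
  simp only [Pi.add_apply, Pi.single_eq_same]
  exact (mul_div_mul_left _ _ (one_sub_q_pow_ne_zero (by omega))).symm

lemma sum_pow_sum_Iio_mul_one_sub {R : Type*} [CommRing R] {n : ℕ} (x : R) (d : Fin n → ℕ) :
    ∑ w, x ^ (∑ l ∈ Iio w, d l) * (1 - x ^ d w) = 1 - x ^ ∑ w, d w := by
  have h := prod_one_sub_ordered univ fun w => 1 - x ^ d w
  simp only [sub_sub_cancel, filter_gt_eq_Iio, prod_pow_eq_pow_sum] at h
  rw [h, sub_sub_cancel]
  exact sum_congr rfl fun w _ => mul_comm _ _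

lemma qmul_succ {N n : ℕ} {d : Fin n → ℕ} (hd : ∑ w, d w = N + 1) :
    qmul (N + 1) d = ∑ w with d w ≠ 0, q ^ (2 * ∑ l ∈ Iio w, d l) * qmul N (d - Pi.single w 1) := by
  have hsum := sum_pow_sum_Iio_mul_one_sub (q ^ 2) d
  simp only [← pow_mul, hd] at hsum
  rw [sum_filter]
  calc qmul (N + 1) d = (1 - q ^ (2 * (N + 1))) * (qp N / ∏ i, qp (d i)) := by
        rw [qmul, qp_succ, mul_comm (qp N), mul_div_assoc]
    _ = _ := by
      rw [← hsum, sum_mul]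
      refine sum_congr rfl fun w _ => ?_
      split_ifs with hw
      · rw [qmul_sub_single N hw, mul_assoc]
      · simp [not_not.mp hw]

section Tables

variable {m p : ℕ}

/-- The entry bound `N` only serves to make the set finite. -/
def tables (N : ℕ) (A : Fin m → ℕ) (B : Fin p → ℕ) : Finset (Fin p → Fin m → ℕ) :=
  (Fintype.piFinset fun _ : Fin p => Fintype.piFinset fun _ : Fin m => range (N + 1)).filter
    fun J => (∀ v, ∑ w, J w v = A v) ∧ ∀ w, ∑ v, J w v = B w

/-- Half the exponent `X(J)`. -/
def crossings (J : Fin p → Fin m → ℕ) : ℕ :=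
  ∑ l₂, ∑ l₁ ∈ Iio l₂, ∑ u₂, ∑ u₁ ∈ Iio u₂, J l₁ u₁ * J l₂ u₂

def tableSum (N : ℕ) (A : Fin m → ℕ) (B : Fin p → ℕ) : F :=
  ∑ J ∈ tables N A B, q ^ (2 * crossings J) * ∏ β, qmul (A β) fun α => J α β

lemma mem_tables {N : ℕ} {A : Fin m → ℕ} {B : Fin p → ℕ} (hB : ∑ w, B w ≤ N)
    {J : Fin p → Fin m → ℕ} :
    J ∈ tables N A B ↔ (∀ v, ∑ w, J w v = A v) ∧ ∀ w, ∑ v, J w v = B w := by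
  refine mem_filter.trans ⟨And.right, fun h => ⟨?_, h⟩⟩
  simp only [Fintype.mem_piFinset, mem_range, Nat.lt_succ_iff]
  intro w v
  calc J w v ≤ ∑ v, J w v := single_le_sum (fun _ _ => Nat.zero_le _) (mem_univ v)
    _ = B w := h.2 w
    _ ≤ ∑ w, B w := single_le_sum (fun _ _ => Nat.zero_le _) (mem_univ w)
    _ ≤ N := hB

lemma add_single_mem_tables_iff {N : ℕ} {A : Fin m → ℕ} {B : Fin p → ℕ} (hB : ∑ w, B w ≤ N)
    {J : Fin p → Fin m → ℕ} (w : Fin p) (v : Fin m) :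
    J + Pi.single w (Pi.single v 1) ∈ tables (N + 1) (A + Pi.single v 1) (B + Pi.single w 1) ↔
      J ∈ tables N A B := by
  have hB' : ∑ l, (B + Pi.single w 1 : Fin p → ℕ) l ≤ N + 1 := by
    simpa [sum_add_distrib] using hB
  have hcol : ∀ u, ∑ l, (J l u + (Pi.single w (Pi.single v 1) : Fin p → Fin m → ℕ) l u) =
      ∑ l, J l u + (Pi.single v 1 : Fin m → ℕ) u := by
    intro u
    simp only [sum_add_distrib, ← Finset.sum_apply, sum_pi_single', mem_univ, if_true]
  have hrow : ∀ l, ∑ u, (J l u + (Pi.single w (Pi.single v 1) : Fin p → Fin m → ℕ) l u) =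
      ∑ u, J l u + (Pi.single w 1 : Fin p → ℕ) l := by
    intro l
    rcases eq_or_ne l w with rfl | hl
    · simp [sum_add_distrib]
    · simp [hl]
  rw [mem_tables hB', mem_tables hB]
  simp only [Pi.add_apply, hcol, hrow, add_left_inj]

lemma single_single_apply (w l : Fin p) (v u : Fin m) :
    (Pi.single w (Pi.single v 1) : Fin p → Fin m → ℕ) l u = if l = w ∧ u = v then 1 else 0 := by
  rcases eq_or_ne l w with rfl | hl
  · simp [Pi.single_apply]
  · simp [hl]

lemma crossings_add_single_last (J : Fin p → Fin (m + 1) → ℕ) (w : Fin p) :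
    crossings (J + Pi.single w (Pi.single (Fin.last m) 1)) + ∑ l ∈ Iio w, J l (Fin.last m) =
      crossings J + ∑ l ∈ Iio w, ∑ u, J l u := by
  have hterm : ∀ l₁ l₂ : Fin p, ∀ u₂, ∀ u₁ ∈ Iio u₂,
      (J + Pi.single w (Pi.single (Fin.last m) 1) : Fin p → Fin (m + 1) → ℕ) l₁ u₁ *
        (J + Pi.single w (Pi.single (Fin.last m) 1) : Fin p → Fin (m + 1) → ℕ) l₂ u₂ =
      J l₁ u₁ * J l₂ u₂ + if l₂ = w ∧ u₂ = Fin.last m then J l₁ u₁ else 0 := by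
    intro l₁ l₂ u₂ u₁ hu
    rw [Pi.add_apply, Pi.add_apply, Pi.add_apply, Pi.add_apply, single_single_apply,
      single_single_apply, if_neg fun h => Fin.ne_last_of_lt (mem_Iio.mp hu) h.2]
    split_ifs <;> ring
  calc crossings (J + Pi.single w (Pi.single (Fin.last m) 1)) + ∑ l ∈ Iio w, J l (Fin.last m)
      = ∑ l₂, ∑ l₁ ∈ Iio l₂, ∑ u₂, ∑ u₁ ∈ Iio u₂,
          (J l₁ u₁ * J l₂ u₂ + if l₂ = w ∧ u₂ = Fin.last m then J l₁ u₁ else 0) +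
            ∑ l ∈ Iio w, J l (Fin.last m) := by
        congr 1
        exact sum_congr rfl fun _ _ => sum_congr rfl fun _ _ => sum_congr rfl fun _ _ =>
          sum_congr rfl fun _ hu => hterm _ _ _ _ hu
    _ = crossings J + ∑ l ∈ Iio w, (∑ u : Fin m, J l u.castSucc + J l (Fin.last m)) := by
      simp only [sum_add_distrib, ite_and, sum_ite_irrel, sum_const_zero, sum_ite_eq', mem_univ,
        if_true, Fin.Iio_last_eq_map, sum_map, Fin.coe_castSuccEmb, add_assoc]
      rfl
    _ = _ := by simp only [Fin.sum_univ_castSucc]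

lemma crossings_snoc_zero (J : Fin p → Fin m → ℕ) :
    crossings (fun l => Fin.snoc (J l) 0 : Fin p → Fin (m + 1) → ℕ) = crossings J :=
  sum_congr rfl fun _ _ => sum_congr rfl fun _ _ => by
    simp only [Fin.sum_univ_castSucc, Fin.snoc_last, mul_zero, sum_const_zero, add_zero,
      Fin.Iio_castSucc, sum_map, Fin.coe_castSuccEmb, Fin.snoc_castSucc]

lemma tableSum_snoc_zero {N : ℕ} (A : Fin m → ℕ) {B : Fin p → ℕ} (hB : ∑ w, B w ≤ N) :
    tableSum N (Fin.snoc A 0 : Fin (m + 1) → ℕ) B = tableSum N A B := by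
  have hlast : ∀ J ∈ tables N (Fin.snoc A 0 : Fin (m + 1) → ℕ) B, ∀ l, J l (Fin.last m) = 0 := by
    intro J hJ l
    have hcol := ((mem_tables hB).mp hJ).1 (Fin.last m)
    rw [Fin.snoc_last, sum_eq_zero_iff] at hcol
    exact hcol l (mem_univ l)
  symm
  refine sum_nbij' (fun J l => Fin.snoc (J l) 0) (fun J l => Fin.init (J l)) ?_ ?_ ?_ ?_ ?_
  · intro J hJ
    obtain ⟨hcol, hrow⟩ := (mem_tables hB).mp hJ
    refine (mem_tables hB).mpr ⟨fun v => ?_, fun l => ?_⟩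
    · refine Fin.lastCases ?_ (fun v => ?_) v <;> simp [hcol]
    · simp [Fin.sum_univ_castSucc, hrow]
  · intro J hJ
    obtain ⟨hcol, hrow⟩ := (mem_tables hB).mp hJ
    refine (mem_tables hB).mpr ⟨fun v => by simpa [Fin.init] using hcol v.castSucc, fun l => ?_⟩
    simpa [Fin.sum_univ_castSucc, hlast J hJ l, Fin.init] using hrow l
  · intro J _
    simp
  · intro J hJ
    funext l
    simp only [← hlast J hJ l, Fin.snoc_init_self]
  · intro J _
    simp [crossings_snoc_zero, Fin.prod_univ_castSucc, qmul, qp_zero]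

lemma prod_qmul_eq_sum_sub_single {A : Fin m → ℕ} {J : Fin p → Fin m → ℕ} {v : Fin m} (hv : A v ≠ 0)
    (hcol : ∑ l, J l v = A v) :
    ∏ β, qmul (A β) (fun α => J α β) = ∑ w with J w v ≠ 0, q ^ (2 * ∑ l ∈ Iio w, J l v) *
      ∏ β, qmul ((A - Pi.single v 1 : Fin m → ℕ) β)
        fun α => (J - Pi.single w (Pi.single v 1) : Fin p → Fin m → ℕ) α β := by
  obtain ⟨a, ha⟩ := Nat.exists_eq_add_one_of_ne_zero hv
  have hother : ∀ w, ∀ β ∈ ({v}ᶜ : Finset (Fin m)),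
      (qmul ((A - Pi.single v 1 : Fin m → ℕ) β)
        fun α => (J - Pi.single w (Pi.single v 1) : Fin p → Fin m → ℕ) α β) =
      qmul (A β) fun α => J α β := by
    intro w β hβ
    have hβv : β ≠ v := by simpa using hβ
    simp [single_single_apply, hβv]
  have hcolv : ∀ w, (fun α => (J - Pi.single w (Pi.single v 1) : Fin p → Fin m → ℕ) α v) =
      (fun α => J α v) - Pi.single w 1 := by
    intro w
    funext α
    rcases eq_or_ne α w with rfl | hα <;> simp [*]
  rw [Fintype.prod_eq_mul_prod_compl v, ha, qmul_succ (hcol.trans ha), sum_mul]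
  refine sum_congr rfl fun w _ => ?_
  rw [Fintype.prod_eq_mul_prod_compl v, prod_congr rfl (hother w), hcolv, mul_assoc]
  simp [ha]

lemma sum_filter_tables_eq_sum_add_single {M : Type*} [AddCommMonoid M] {N : ℕ}
    {A : Fin m → ℕ} {B : Fin p → ℕ} {w : Fin p} {v : Fin m} (hA : A v ≠ 0) (hBw : B w ≠ 0)
    (hB : ∑ l, B l = N + 1) (f : (Fin p → Fin m → ℕ) → M) :
    ∑ J ∈ tables (N + 1) A B with J w v ≠ 0, f J =
      ∑ J ∈ tables N (A - Pi.single v 1) (B - Pi.single w 1),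
        f (J + Pi.single w (Pi.single v 1)) := by
  have hmem := fun J => add_single_mem_tables_iff (A := A - Pi.single v 1)
    (sum_sub_single hBw hB).le (J := J) w v
  rw [Pi.sub_single_add_single (Nat.one_le_iff_ne_zero.mpr hA),
    Pi.sub_single_add_single (Nat.one_le_iff_ne_zero.mpr hBw)] at hmem
  have hcancel : ∀ J : Fin p → Fin m → ℕ, J w v ≠ 0 →
      J - Pi.single w (Pi.single v 1) + Pi.single w (Pi.single v 1) = J := fun J hJ =>
    Pi.sub_single_add_single (Pi.single_le_iff.mpr (Nat.one_le_iff_ne_zero.mpr hJ))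
  refine (sum_nbij' (· + Pi.single w (Pi.single v 1)) (· - Pi.single w (Pi.single v 1))
    ?_ ?_ ?_ ?_ ?_).symm
  · intro J hJ
    exact mem_filter.mpr ⟨(hmem J).mpr hJ, by simp⟩
  · intro J hJ
    obtain ⟨hJ, hJw⟩ := mem_filter.mp hJ
    rwa [← hmem, hcancel J hJw]
  · intro J _
    exact add_tsub_cancel_right _ _
  · intro J hJ
    exact hcancel J (mem_filter.mp hJ).2
  · intro J _
    rfl

lemma tableSum_succ {N : ℕ} {A : Fin (m + 1) → ℕ} {B : Fin p → ℕ}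
    (hA : A (Fin.last m) ≠ 0) (hB : ∑ w, B w = N + 1) :
    tableSum (N + 1) A B = ∑ w with B w ≠ 0, q ^ (2 * ∑ l ∈ Iio w, B l) *
      tableSum N (A - Pi.single (Fin.last m) 1) (B - Pi.single w 1) := by
  have hswap : ∀ J w, J ∈ tables (N + 1) A B ∧ w ∈ ({w | J w (Fin.last m) ≠ 0} : Finset _) ↔
      J ∈ ({J ∈ tables (N + 1) A B | J w (Fin.last m) ≠ 0} : Finset _) ∧
        w ∈ ({w | B w ≠ 0} : Finset _) := by
    intro J w
    simp only [mem_filter, mem_univ, true_and]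
    refine ⟨fun ⟨hJ, hJw⟩ => ⟨⟨hJ, hJw⟩, ?_⟩, fun ⟨h, _⟩ => h⟩
    rw [← ((mem_tables hB.le).mp hJ).2 w]
    exact (Nat.pos_of_ne_zero hJw).trans_le (single_le_sum (fun _ _ => Nat.zero_le _)
      (mem_univ _)) |>.ne'
  rw [tableSum, sum_congr rfl fun J hJ => by
    rw [prod_qmul_eq_sum_sub_single hA (((mem_tables hB.le).mp hJ).1 _), mul_sum], sum_comm' hswap]
  refine sum_congr rfl fun w hw => ?_
  have hBw : B w ≠ 0 := (mem_filter.mp hw).2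
  rw [sum_filter_tables_eq_sum_add_single hA hBw hB, tableSum, mul_sum]
  refine sum_congr rfl fun J hJ => ?_
  have hrow := ((mem_tables (sum_sub_single hBw hB).le).mp hJ).2
  have habove : ∑ l ∈ Iio w, ∑ u, J l u = ∑ l ∈ Iio w, B l :=
    sum_congr rfl fun l hl => by simp [hrow, (mem_Iio.mp hl).ne]
  have hlast : ∑ l ∈ Iio w,
      (J + Pi.single w (Pi.single (Fin.last m) 1) : Fin p → Fin (m + 1) → ℕ) l (Fin.last m) =
        ∑ l ∈ Iio w, J l (Fin.last m) :=
    sum_congr rfl fun l hl => by simp [(mem_Iio.mp hl).ne]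
  have hexp := crossings_add_single_last J w
  rw [habove, ← hlast] at hexp
  rw [add_tsub_cancel_right, ← mul_assoc, ← mul_assoc, ← pow_add, ← pow_add, ← mul_add,
    ← mul_add, hexp, add_comm]

lemma qmul_eq_tableSum_of_isEmpty (A : Fin 0 → ℕ) {B : Fin p → ℕ} (hB : ∑ w, B w = 0) :
    qmul 0 B = tableSum 0 A B := by
  obtain rfl : B = 0 := funext fun w => sum_eq_zero_iff.mp hB w (mem_univ w)
  have huniv : tables 0 A (0 : Fin p → ℕ) = univ :=
    eq_univ_of_forall fun J => (mem_tables (by simp)).mpr ⟨fun v => v.elim0, fun w => by simp⟩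
  simp [tableSum, huniv, crossings, qmul, qp_zero]

end Tables

theorem qmul_eq_tableSum {m p : ℕ} (N : ℕ) (A : Fin m → ℕ) (B : Fin p → ℕ)
    (hA : ∑ v, A v = N) (hB : ∑ w, B w = N) : qmul N B = tableSum N A B := by
  induction m generalizing N B with
  | zero =>
    obtain rfl : N = 0 := by simpa using hA.symm
    exact qmul_eq_tableSum_of_isEmpty A hB
  | succ m ihm =>
    induction N using Nat.strong_induction_on generalizing A B with
    | _ N ih =>
    obtain hlast | hlast := eq_or_ne (A (Fin.last m)) 0
    · rw [← Fin.snoc_init_self A, hlast, tableSum_snoc_zero _ hB.le]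
      exact ihm N _ B (by simpa [Fin.sum_univ_castSucc, hlast, Fin.init] using hA) hB
    · obtain ⟨N, rfl⟩ : ∃ n, N = n + 1 := Nat.exists_eq_add_one_of_ne_zero fun hN => hlast <|
        sum_eq_zero_iff.mp (hA.trans hN) _ (mem_univ _)
      rw [qmul_succ hB, tableSum_succ hlast hB]
      refine sum_congr rfl fun w hw => ?_
      rw [ih N N.lt_succ_self _ _ (sum_sub_single hlast hA)
        (sum_sub_single (mem_filter.mp hw).2 hB)]

theorem qmultinomial_expansion_general (m p N : ℕ)
    (A : Fin m → ℕ) (B : Fin p → ℕ) (hA : ∑ v, A v = N) (hB : ∑ w, B w = N) :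
    qmul N B =
      ∑ J ∈ (Fintype.piFinset fun _ : Fin p =>
            Fintype.piFinset fun _ : Fin m => Finset.range (N + 1)).filter
          (fun J => (∀ v : Fin m, ∑ w : Fin p, J w v = A v) ∧
            (∀ w : Fin p, ∑ v : Fin m, J w v = B w)),
        q ^ (2 * ∑ l₂ : Fin p, ∑ l₁ ∈ Finset.Iio l₂,
              ∑ u₂ : Fin m, ∑ u₁ ∈ Finset.Iio u₂, J l₁ u₁ * J l₂ u₂) *
          ∏ β : Fin m, qmul (A β) (fun α : Fin p => J α β) :=
  qmul_eq_tableSum N A B hA hB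

/-- Lemma 4.6 of KRSS: expansion of a quantum multinomial coefficient. -/
theorem qmultinomial_expansion (m p N : ℕ) (hm : 1 ≤ m) (hp : 1 ≤ p)
    (A : Fin m → ℕ) (B : Fin p → ℕ) (hA : ∑ v, A v = N) (hB : ∑ w, B w = N) :
    qmul N B =
      ∑ J ∈ (Fintype.piFinset fun _ : Fin p =>
            Fintype.piFinset fun _ : Fin m => Finset.range (N + 1)).filter
          (fun J => (∀ v : Fin m, ∑ w : Fin p, J w v = A v) ∧
            (∀ w : Fin p, ∑ v : Fin m, J w v = B w)),
        q ^ (2 * ∑ l₂ : Fin p, ∑ l₁ ∈ Finset.Iio l₂,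
              ∑ u₂ : Fin m, ∑ u₁ ∈ Finset.Iio u₂, J l₁ u₁ * J l₂ u₂) *
          ∏ β : Fin m, qmul (A β) (fun α : Fin p => J α β) :=
  qmultinomial_expansion_general m p N A B hA hB
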